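/- The 5-ary Boolean relation R = { (x₁,x₂,x₃,c₀,c₁) ∈ Bool⁵ | (x₁ ↔ x₂ ∧ x₃) ∧ (c₀ = 0) ∧ (c₁ = 1) } = { (0,0,0,0,1), (0,0,1,0,1), (0,1,0,0,1), (1,1,1,0,1) } is a weak base of the co-clone it generates (this co-clone is IE₂ in Post's lattice): for every finite set Δ of Boolean relations with Pol(Δ) = Pol({R}) one has pPol(Δ) ⊆ pPol({R}). -/

import Mathlib

/-!
Let `M` be the `4 × 5` matrix whose rows are the tuples of `R`, and `φ : Bool⁴ → Fin 5` a
retraction of `Bool⁴` onto the columns of `M`. For `t ∈ R` the operation `t ∘ φ` is a conjunction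
of variables, so it lies in `Pol R = Pol Δ`. If a partial polymorphism `f` of `Δ` maps tuples
`t₁, …, tₘ` of `R` to `u`, then `u ∘ φ = f (t₁ ∘ φ, …, tₘ ∘ φ)` is total and preserves every
relation of `Δ`, so it lies in `Pol Δ = Pol R`. Applied to the rows of `M` it returns `u`, hence
`u ∈ R`.
-/

/-- A Boolean relation of arity `k`: a set of `k`-tuples over `Bool`. -/
abbrev BRel (k : ℕ) := Set (Fin k → Bool)

/-- A total `m`-ary Boolean operation `f` preserves a `k`-ary relation `R`. -/
def Preserves {m k : ℕ} (f : (Fin m → Bool) → Bool) (R : BRel k) : Prop :=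
  ∀ ts : Fin m → Fin k → Bool, (∀ j, ts j ∈ R) → (fun i => f (fun j => ts j i)) ∈ R

/-- A partial `m`-ary Boolean operation (modelled with `Option Bool`; `none` =
undefined) preserves a `k`-ary relation `R`. -/
def PPreserves {m k : ℕ} (f : (Fin m → Bool) → Option Bool) (R : BRel k) : Prop :=
  ∀ ts : Fin m → Fin k → Bool, (∀ j, ts j ∈ R) →
    ∀ u : Fin k → Bool, (∀ i, f (fun j => ts j i) = some (u i)) → u ∈ R

/-- The set of all (finitary, total) polymorphisms of a set of relations. -/
def Pol (Γ : Set (Σ k, BRel k)) : Set (Σ m, (Fin m → Bool) → Bool) :=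
  { f | ∀ R ∈ Γ, Preserves f.2 R.2 }

/-- The set of all partial polymorphisms of a set of relations. -/
def pPol (Γ : Set (Σ k, BRel k)) : Set (Σ m, (Fin m → Bool) → Option Bool) :=
  { f | ∀ R ∈ Γ, PPreserves f.2 R.2 }

/-- `R` is a weak base of the co-clone it generates: every finite `Δ` with the
same polymorphisms as `R` satisfies `pPol Δ ⊆ pPol {R}`. -/
def IsWeakBase {k : ℕ} (R : BRel k) : Prop :=
  ∀ Δ : Set (Σ k, BRel k), Δ.Finite →
    Pol Δ = Pol {⟨k, R⟩} → pPol Δ ⊆ pPol {⟨k, R⟩}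

theorem mem_pol_singleton_iff {m k : ℕ} {R : BRel k} {g : (Fin m → Bool) → Bool} :
    (⟨m, g⟩ : Σ m, (Fin m → Bool) → Bool) ∈ Pol {⟨k, R⟩} ↔ Preserves g R := by
  simp [Pol]

theorem PPreserves.preserves_comp {m n k l : ℕ} {S : BRel l} {f : (Fin m → Bool) → Option Bool}
    (hf : PPreserves f S) {ts : Fin m → Fin k → Bool} {u : Fin k → Bool}
    (hu : ∀ i, f (fun j => ts j i) = some (u i)) {φ : (Fin n → Bool) → Fin k}
    (hts : ∀ j, Preserves (fun v => ts j (φ v)) S) :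
    Preserves (fun v => u (φ v)) S :=
  fun ms hms => hf (fun j l => ts j (φ fun r => ms r l)) (fun j => hts j ms hms) _ fun _ => hu _

theorem isWeakBase_of_retraction {k n : ℕ} {R : BRel k} (M : Fin n → Fin k → Bool)
    (hM : ∀ r, M r ∈ R) (φ : (Fin n → Bool) → Fin k) (hφ : ∀ i, φ (fun r => M r i) = i)
    (hR : ∀ t ∈ R, Preserves (fun v => t (φ v)) R) : IsWeakBase R := by
  rintro Δ - hPol f hf _ rfl _ hts u hu
  have hPolR : ∀ {m} (g : (Fin m → Bool) → Bool), Preserves g R ↔ ⟨m, g⟩ ∈ Pol Δ := fun g => by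
    rw [hPol, mem_pol_singleton_iff]
  have huφ : Preserves (fun v => u (φ v)) R := (hPolR _).2 fun S hS =>
    (hf S hS).preserves_comp hu fun j => (hPolR _).1 (hR _ (hts j)) S hS
  simpa only [hφ] using huφ M hM

theorem Preserves.proj {m k : ℕ} (R : BRel k) (j : Fin m) : Preserves (fun v => v j) R :=
  fun _ hts => hts j

theorem Preserves.and {m k : ℕ} {R : BRel k}
    (hR : ∀ a ∈ R, ∀ b ∈ R, (fun i => a i && b i) ∈ R) {f g : (Fin m → Bool) → Bool}
    (hf : Preserves f R) (hg : Preserves g R) : Preserves (fun v => f v && g v) R :=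
  fun ts hts => hR _ (hf ts hts) _ (hg ts hts)

namespace IE₂

def rel : BRel 5 := { t | (t 0 = (t 1 && t 2)) ∧ t 3 = false ∧ t 4 = true }

theorem and_mem_rel : ∀ a ∈ rel, ∀ b ∈ rel, (fun i => a i && b i) ∈ rel := by
  rintro a ⟨ha0, ha3, ha4⟩ b ⟨hb0, -, hb4⟩
  refine ⟨?_, by simp [ha3], by simp [ha4, hb4]⟩
  simp only [ha0, hb0]
  cases a 1 <;> cases a 2 <;> cases b 1 <;> cases b 2 <;> rfl

def tuples : Fin 4 → Fin 5 → Bool :=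
  ![![false, false, false, false, true],
    ![false, false, true , false, true],
    ![false, true , false, false, true],
    ![true , true , true , false, true]]

theorem tuples_mem (r : Fin 4) : tuples r ∈ rel := by
  fin_cases r <;> exact ⟨rfl, rfl, rfl⟩

def retract (v : Fin 4 → Bool) : Fin 5 :=
  if v 3 then (if v 1 then (if v 2 then 4 else 2) else (if v 2 then 1 else 0)) else 3

theorem retract_column (i : Fin 5) : retract (fun r => tuples r i) = i := by
  fin_cases i <;> decide

theorem apply_retract {t : Fin 5 → Bool} (ht : t ∈ rel) (v : Fin 4 → Bool) :
    t (retract v) = (v 3 && (t 1 || v 1) && (t 2 || v 2)) := by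
  obtain ⟨h0, h3, h4⟩ := ht
  unfold retract
  split_ifs <;> simp_all

theorem preserves_comp_retract {t : Fin 5 → Bool} (ht : t ∈ rel) :
    Preserves (fun v => t (retract v)) rel := by
  simp only [apply_retract ht]
  cases t 1 <;> cases t 2 <;> simp only [Bool.true_or, Bool.false_or, Bool.and_true] <;>
    apply_rules [Preserves.and, Preserves.proj, and_mem_rel]

end IE₂

theorem stmt18 :
    IsWeakBase { t : Fin 5 → Bool |
      (t 0 = (t 1 && t 2)) ∧ t 3 = false ∧ t 4 = true } :=
  isWeakBase_of_retraction IE₂.tuples IE₂.tuples_mem IE₂.retract IE₂.retract_column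
    fun _ => IE₂.preserves_comp_retract
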